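/- arXiv:1711.03436 — 2 statements merged into one kernel-verified Lean document; each statement's English description precedes it below -/
import Mathlib

section
/- Soundness of monitoring only allocations and function-call returns: in an operational semantics with statements allocation, assignment, load, store, and library call, if every allocation and every library-call return is monitored (so all abstract-object mappings ō↝o and all edges x↪ō at call statements are reported), then for every dynamic points-to edge x↪o occurring in an execution trace, either x↪o is reported, or x↪o is derivable by the static rules (assignment, load/store) from reported edges and allocation edges. -/
/-- Events (statement steps): allocation, assignment, load, store, and library
call (which assigns the returned concrete object `c` to `x`). -/
inductive Ev (V F M O CO : Type) where
  | alloc (x : V) (o : O) (c : CO)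
  | assign (x y : V)
  | load (x y : V) (f : F)
  | store (x : V) (f : F) (y : V)
  | call (x : V) (m : M) (y : V) (c : CO)

/-- A state: environment and heap. -/
structure St (V F CO : Type) where
  env : V → Option CO
  heap : CO → F → Option CO

/-- Small-step semantics of a single statement. Since only program code is
modeled (library effects appear only as call-return events), all heap writes use
program fields: the disjoint fields assumption is built in. -/
def step {V F M O CO : Type} [DecidableEq V] [DecidableEq F] [DecidableEq CO]
    (σ : St V F CO) : Ev V F M O CO → St V F CO
  | .alloc x _ c => ⟨Function.update σ.env x (some c), σ.heap⟩
  | .assign x y => ⟨Function.update σ.env x (σ.env y), σ.heap⟩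
  | .load x y f => ⟨Function.update σ.env x (σ.env y >>= fun c => σ.heap c f), σ.heap⟩
  | .store x f y =>
      ⟨σ.env, fun c g => if σ.env x = some c ∧ g = f then σ.env y else σ.heap c g⟩
  | .call x _ _ c => ⟨Function.update σ.env x (some c), σ.heap⟩

def runs {V F M O CO : Type} [DecidableEq V] [DecidableEq F] [DecidableEq CO]
    (σ0 : St V F CO) (tr : List (Ev V F M O CO)) : St V F CO :=
  tr.foldl step σ0

/-- The state reached after the first `i` steps of the trace. -/
def stateAt {V F M O CO : Type} [DecidableEq V] [DecidableEq F] [DecidableEq CO]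
    (σ0 : St V F CO) (tr : List (Ev V F M O CO)) (i : ℕ) : St V F CO :=
  runs σ0 (tr.take i)

/-- Static derivation from reported edges: monitored allocations give allocation
edges and the abstract object mapping; monitored library-call returns give
reported edges (rule `report`); the assignment and load/store rules are the
static points-to rules over the statements occurring in the trace. -/
inductive Derives {V F M O CO : Type} (tr : List (Ev V F M O CO)) : V → O → Prop where
  | alloc {x o c} : Ev.alloc x o c ∈ tr → Derives tr x o
  | assign {x y o} : Ev.assign x y ∈ tr → Derives tr y o → Derives tr x o
  | loadstore {x y z w : V} {f : F} {o o' : O} :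
      Ev.load x y f ∈ tr → Ev.store z f w ∈ tr →
      Derives tr y o' → Derives tr z o' → Derives tr w o → Derives tr x o
  | report {x : V} {m : M} {y x' : V} {o : O} {c : CO} :
      Ev.call x m y c ∈ tr → Ev.alloc x' o c ∈ tr → Derives tr x o

/-!
The proof is an invariant of the execution (`StateSound`). Say `x` covers a concrete object `c`
if `x ↪ o` is derivable for every allocation site `o` of `c`. After every prefix of the trace,
each variable covers the object it holds, and each heap cell `c'.f ↦ c` was written by a store
`z.f ← w` with `z` covering `c'` and `w` covering `c`. An allocated object has a single site, and
a call return is reported; an assignment passes coverage on; and a load `x ← y.f` reads a cell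
written by some `z.f ← w`, where `y` and `z` both derive a site of the base object, which is
exactly the premise of the load/store rule.
-/

section PointsTo

variable {V F M O CO : Type}

def AllocSite (tr : List (Ev V F M O CO)) (c : CO) (o : O) : Prop :=
  ∃ x, Ev.alloc x o c ∈ tr

def UniqueAllocSites (tr : List (Ev V F M O CO)) : Prop :=
  ∀ c o o', AllocSite tr c o → AllocSite tr c o' → o = o'

def Covers (tr : List (Ev V F M O CO)) (x : V) (c : CO) : Prop :=
  ∀ o, AllocSite tr c o → Derives tr x o

structure StateSound (tr : List (Ev V F M O CO)) (σ : St V F CO) : Prop where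
  env : ∀ x c, σ.env x = some c → Covers tr x c
  heap : ∀ c' f c, σ.heap c' f = some c →
    ∃ z w, Ev.store z f w ∈ tr ∧ Covers tr z c' ∧ Covers tr w c

theorem uniqueAllocSites_of_getElem? {tr : List (Ev V F M O CO)}
    (h : ∀ (i j : ℕ) (x x' : V) (o o' : O) (c : CO),
      tr[i]? = some (Ev.alloc x o c) → tr[j]? = some (Ev.alloc x' o' c) → i = j) :
    UniqueAllocSites tr := by
  rintro c o o' ⟨x, hx⟩ ⟨x', hx'⟩
  obtain ⟨i, hi⟩ := List.mem_iff_getElem?.1 hx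
  obtain ⟨j, hj⟩ := List.mem_iff_getElem?.1 hx'
  obtain rfl := h i j x x' o o' c hi hj
  rw [hi] at hj
  cases hj
  rfl

theorem stateSound_of_empty (tr : List (Ev V F M O CO)) {σ : St V F CO}
    (hEnv : ∀ v, σ.env v = none) (hHeap : ∀ c f, σ.heap c f = none) : StateSound tr σ where
  env x c h := by simp [hEnv] at h
  heap c' f c h := by simp [hHeap] at h

variable [DecidableEq V] {tr : List (Ev V F M O CO)} {σ : St V F CO}

theorem StateSound.update_env (hσ : StateSound tr σ) {x : V} {v : Option CO}
    (hx : ∀ c, v = some c → Covers tr x c) :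
    StateSound tr ⟨Function.update σ.env x v, σ.heap⟩ where
  env y c h := by
    rcases eq_or_ne y x with rfl | hne
    · exact hx c (by simpa using h)
    · exact hσ.env y c (by simpa [Function.update_of_ne hne] using h)
  heap := hσ.heap

variable [DecidableEq F] [DecidableEq CO]

theorem StateSound.step (hσ : StateSound tr σ) {e : Ev V F M O CO} (he : e ∈ tr)
    (hsites : UniqueAllocSites tr)
    (hallocated : ∀ y c, σ.env y = some c → ∃ o, AllocSite tr c o) :
    StateSound tr (_root_.step σ e) := by
  cases e with
  | alloc x o c =>
    refine hσ.update_env ?_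
    rintro _ ⟨⟩ o' ho'
    obtain rfl := hsites c o o' ⟨x, he⟩ ho'
    exact .alloc he
  | assign x y =>
    exact hσ.update_env fun c hy o ho => .assign he (hσ.env y c hy o ho)
  | load x y f =>
    refine hσ.update_env fun c hc o ho => ?_
    obtain ⟨cy, hy, hcell⟩ := Option.bind_eq_some_iff.1 hc
    obtain ⟨z, w, hstore, hz, hw⟩ := hσ.heap cy f c hcell
    obtain ⟨o', ho'⟩ := hallocated y cy hy
    exact .loadstore he hstore (hσ.env y cy hy o' ho') (hz o' ho') (hw o ho)
  | store x f y =>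
    refine ⟨hσ.env, fun c' g c h => ?_⟩
    by_cases hxg : σ.env x = some c' ∧ g = f
    · obtain ⟨hx, rfl⟩ := hxg
      simp only [_root_.step, hx, and_self, if_true] at h
      exact ⟨x, y, he, hσ.env x c' hx, hσ.env y c h⟩
    · simp only [_root_.step, if_neg hxg] at h
      exact hσ.heap c' g c h
  | call x m y c =>
    refine hσ.update_env ?_
    rintro _ ⟨⟩ o ⟨x', hx'⟩
    exact .report he hx'

theorem stateAt_succ_of_getElem? {σ0 : St V F CO} {i : ℕ} {e : Ev V F M O CO}
    (h : tr[i]? = some e) : stateAt σ0 tr (i + 1) = _root_.step (stateAt σ0 tr i) e := by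
  simp [stateAt, runs, List.take_add_one, h]

theorem stateAt_succ_of_getElem?_eq_none {σ0 : St V F CO} {i : ℕ}
    (h : tr[i]? = none) : stateAt σ0 tr (i + 1) = stateAt σ0 tr i := by
  simp [stateAt, List.take_add_one, h]

end PointsTo

theorem stmt7_general {V F M O CO : Type} [DecidableEq V] [DecidableEq F] [DecidableEq CO]
    (σ0 : St V F CO)
    (hEnv : ∀ v, σ0.env v = none) (hHeap : ∀ c f, σ0.heap c f = none)
    (tr : List (Ev V F M O CO))
    (hUniq : ∀ (i j : ℕ) (x x' : V) (o o' : O) (c : CO),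
      tr[i]? = some (Ev.alloc x o c) → tr[j]? = some (Ev.alloc x' o' c) → i = j)
    (hAllAlloc : ∀ i v c, (stateAt σ0 tr i).env v = some c →
      ∃ x'' o'', Ev.alloc x'' o'' c ∈ tr)
    (i : ℕ) (x : V) (c : CO) (x' : V) (o : O)
    (hdyn : (stateAt σ0 tr i).env x = some c)
    (halloc : Ev.alloc x' o c ∈ tr) :
    Derives tr x o := by
  have hsites := uniqueAllocSites_of_getElem? hUniq
  have hsound : ∀ i, StateSound tr (stateAt σ0 tr i) := by
    intro i
    induction i with
    | zero => exact stateSound_of_empty tr hEnv hHeap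
    | succ i ih =>
      cases hte : tr[i]? with
      | none => rwa [stateAt_succ_of_getElem?_eq_none hte]
      | some e =>
        rw [stateAt_succ_of_getElem? hte]
        refine ih.step (List.mem_of_getElem? hte) hsites fun y c hy => ?_
        obtain ⟨x'', o'', h⟩ := hAllAlloc i y c hy
        exact ⟨o'', x'', h⟩
  exact (hsound i).env x c hdyn o ⟨x', halloc⟩

/-- Soundness of monitoring only allocations and call returns:
starting from the empty state, if concrete objects are allocated freshly and at a
unique allocation statement, and every object occurring in the environment is
allocated in available code (no allocations in library code), then every dynamic
points-to edge `x ↪ o` occurring in the trace is either reported or derivable by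
the static rules from reported edges and allocation edges, i.e. `Derives tr x o`. -/
theorem stmt7 {V F M O CO : Type} [DecidableEq V] [DecidableEq F] [DecidableEq CO]
    (σ0 : St V F CO)
    (hEnv : ∀ v, σ0.env v = none) (hHeap : ∀ c f, σ0.heap c f = none)
    (tr : List (Ev V F M O CO))
    (hFresh : ∀ i x o c, tr[i]? = some (.alloc x o c) →
      (∀ v, (stateAt σ0 tr i).env v ≠ some c) ∧
      (∀ c' f, (stateAt σ0 tr i).heap c' f ≠ some c))
    (hUniq : ∀ (i j : ℕ) (x x' : V) (o o' : O) (c : CO),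
      tr[i]? = some (Ev.alloc x o c) → tr[j]? = some (Ev.alloc x' o' c) → i = j)
    (hAllAlloc : ∀ i v c, (stateAt σ0 tr i).env v = some c →
      ∃ x'' o'', Ev.alloc x'' o'' c ∈ tr)
    (i : ℕ) (x : V) (c : CO) (x' : V) (o : O)
    (hdyn : (stateAt σ0 tr i).env x = some c)
    (halloc : Ev.alloc x' o c ∈ tr) :
    Derives tr x o :=
  stmt7_general σ0 hEnv hHeap tr hUniq hAllAlloc i x c x' o hdyn halloc
end

section
/- In the abstract operational model where library calls are the only statements that can introduce an edge not derivable statically, the first missing dynamic edge x↪ō (ō allocated in available code) occurring in an execution must be assigned to x by a library call statement x←m(y); it cannot be introduced by an allocation, assignment, load, or store. -/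
/-- Optimistic static derivation (no reports): the allocation, assignment and
load/store rules over the statements occurring in the trace; library calls are
treated as no-ops. -/
inductive SDerives {V F M O CO : Type} (tr : List (Ev V F M O CO)) : V → O → Prop where
  | alloc {x o c} : Ev.alloc x o c ∈ tr → SDerives tr x o
  | assign {x y o} : Ev.assign x y ∈ tr → SDerives tr y o → SDerives tr x o
  | loadstore {x y z w : V} {f : F} {o o' : O} :
      Ev.load x y f ∈ tr → Ev.store z f w ∈ tr →
      SDerives tr y o' → SDerives tr z o' → SDerives tr w o → SDerives tr x o

section

variable {V F M O CO : Type}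

def EnvSound (tr : List (Ev V F M O CO)) (σ : St V F CO) : Prop :=
  ∀ x c x' o, σ.env x = some c → Ev.alloc x' o c ∈ tr → SDerives tr x o

def HeapSound (tr : List (Ev V F M O CO)) (σ : St V F CO) : Prop :=
  ∀ c f c' x o x' o', σ.heap c f = some c' → Ev.alloc x o c ∈ tr → Ev.alloc x' o' c' ∈ tr →
    ∃ z w, Ev.store z f w ∈ tr ∧ SDerives tr z o ∧ SDerives tr w o'

theorem allocSite_unique {tr : List (Ev V F M O CO)}
    (hUniq : ∀ (i j : ℕ) (x x' : V) (o o' : O) (c : CO),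
      tr[i]? = some (Ev.alloc x o c) → tr[j]? = some (Ev.alloc x' o' c) → i = j)
    {x x' : V} {o o' : O} {c : CO}
    (h : Ev.alloc x o c ∈ tr) (h' : Ev.alloc x' o' c ∈ tr) : o = o' := by
  obtain ⟨n, hn⟩ := List.mem_iff_getElem?.mp h
  obtain ⟨n', hn'⟩ := List.mem_iff_getElem?.mp h'
  obtain rfl := hUniq n n' x x' o o' c hn hn'
  rw [hn] at hn'
  cases hn'
  rfl

variable [DecidableEq V] [DecidableEq F] [DecidableEq CO]

theorem stateAt_succ (σ0 : St V F CO) (tr : List (Ev V F M O CO)) {i : ℕ}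
    {e : Ev V F M O CO} (h : tr[i]? = some e) :
    stateAt σ0 tr (i + 1) = step (stateAt σ0 tr i) e := by
  simp [stateAt, runs, List.take_add_one, h]

theorem heapSound_step {tr : List (Ev V F M O CO)} {σ : St V F CO} {e : Ev V F M O CO}
    (he : e ∈ tr) (henv : EnvSound tr σ) (hheap : HeapSound tr σ) :
    HeapSound tr (step σ e) := by
  intro c f c' x o x' o' h hc hc'
  cases e with
  | store z g w =>
    simp only [step] at h
    split_ifs at h with hz
    · obtain ⟨hzc, rfl⟩ := hz
      exact ⟨z, w, he, henv z c x o hzc hc, henv w c' x' o' h hc'⟩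
    · exact hheap c f c' x o x' o' h hc hc'
  | alloc | assign | load | call => exact hheap c f c' x o x' o' h hc hc'

theorem heapSound_stateAt {σ0 : St V F CO} (hHeap : ∀ c f, σ0.heap c f = none)
    {tr : List (Ev V F M O CO)} {i : ℕ} (hi : i ≤ tr.length)
    (henv : ∀ j < i, EnvSound tr (stateAt σ0 tr j)) :
    HeapSound tr (stateAt σ0 tr i) := by
  induction i with
  | zero =>
    intro c f c' _ _ _ _ h
    simp [stateAt, runs, hHeap] at h
  | succ j ih =>
    have hj : j < tr.length := hi
    rw [stateAt_succ σ0 tr (List.getElem?_eq_getElem hj)]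
    exact heapSound_step (List.getElem_mem hj) (henv j j.lt_succ_self)
      (ih hj.le fun k hk => henv k (hk.trans j.lt_succ_self))

theorem derives_or_call_of_step {tr : List (Ev V F M O CO)} {σ : St V F CO}
    {e : Ev V F M O CO} (he : e ∈ tr) (henv : EnvSound tr σ) (hheap : HeapSound tr σ)
    (hallocated : ∀ v c, σ.env v = some c → ∃ x o, Ev.alloc x o c ∈ tr)
    (hsite : ∀ {x x' : V} {o o' : O} {c : CO},
      Ev.alloc x o c ∈ tr → Ev.alloc x' o' c ∈ tr → o = o')
    {x x' : V} {c : CO} {o : O} (h : (step σ e).env x = some c) (hc : Ev.alloc x' o c ∈ tr) :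
    SDerives tr x o ∨ ∃ m y, e = Ev.call x m y c := by
  cases e with
  | alloc x₂ o₂ c₂ =>
    simp only [step, Function.update_apply] at h
    split_ifs at h with hx
    · cases hx; cases h
      obtain rfl := hsite hc he
      exact .inl (.alloc he)
    · exact .inl (henv x c x' o h hc)
  | assign x₂ y =>
    simp only [step, Function.update_apply] at h
    split_ifs at h with hx
    · cases hx
      exact .inl (.assign he (henv y c x' o h hc))
    · exact .inl (henv x c x' o h hc)
  | load x₂ y f =>
    simp only [step, Function.update_apply] at h
    split_ifs at h with hx
    · cases hx
      obtain ⟨cy, hy, hfield⟩ := Option.bind_eq_some_iff.mp h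
      obtain ⟨xy, oy, hcy⟩ := hallocated y cy hy
      obtain ⟨z, w, hst, hz, hw⟩ := hheap cy f c xy oy x' o hfield hcy hc
      exact .inl (.loadstore he hst (henv y cy xy oy hy hcy) hz hw)
    · exact .inl (henv x c x' o h hc)
  | store =>
    exact .inl (henv x c x' o h hc)
  | call x₂ m y c₂ =>
    simp only [step, Function.update_apply] at h
    split_ifs at h with hx
    · cases hx; cases h
      exact .inr ⟨m, y, rfl⟩
    · exact .inl (henv x c x' o h hc)

end

theorem stmt8_general {V F M O CO : Type} [DecidableEq V] [DecidableEq F] [DecidableEq CO]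
    (σ0 : St V F CO)
    (hHeap : ∀ c f, σ0.heap c f = none)
    (tr : List (Ev V F M O CO))
    (hUniq : ∀ (i j : ℕ) (x x' : V) (o o' : O) (c : CO),
      tr[i]? = some (Ev.alloc x o c) → tr[j]? = some (Ev.alloc x' o' c) → i = j)
    (hAllAlloc : ∀ i v c, (stateAt σ0 tr i).env v = some c →
      ∃ x'' o'', Ev.alloc x'' o'' c ∈ tr)
    (i : ℕ) (x : V) (c : CO) (x' : V) (o : O)
    (hlen : i < tr.length)
    (hdyn : (stateAt σ0 tr (i + 1)).env x = some c)
    (halloc : Ev.alloc x' o c ∈ tr)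
    (hmiss : ¬ SDerives tr x o)
    (hfirst : ∀ j ≤ i, ∀ (x1 : V) (c1 : CO) (x1' : V) (o1 : O),
      (stateAt σ0 tr j).env x1 = some c1 → Ev.alloc x1' o1 c1 ∈ tr →
      SDerives tr x1 o1) :
    ∃ m y, tr[i]? = some (Ev.call x m y c) := by
  have he : tr[i]? = some tr[i] := List.getElem?_eq_getElem hlen
  rw [stateAt_succ σ0 tr he] at hdyn
  have hheap : HeapSound tr (stateAt σ0 tr i) :=
    heapSound_stateAt hHeap hlen.le fun j hj => hfirst j hj.le
  rcases derives_or_call_of_step (List.getElem_mem hlen) (hfirst i le_rfl) hheap (hAllAlloc i)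
      (allocSite_unique hUniq) hdyn halloc with hder | ⟨m, y, hcall⟩
  · exact absurd hder hmiss
  · exact ⟨m, y, hcall ▸ he⟩

/-- The first missing dynamic edge `x ↪ c` (with `c` allocated in
available code at site `o`) occurring in an execution must be assigned to `x` by a
library call statement: if the edge is missing (not statically derivable) at state
`i+1` but no missing edge exists at any state `j ≤ i`, then the `i`-th statement
is a library call assigning `c` to `x`; it cannot be an allocation, assignment,
load, or store. -/
theorem stmt8 {V F M O CO : Type} [DecidableEq V] [DecidableEq F] [DecidableEq CO]
    (σ0 : St V F CO)
    (hEnv : ∀ v, σ0.env v = none) (hHeap : ∀ c f, σ0.heap c f = none)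
    (tr : List (Ev V F M O CO))
    (hFresh : ∀ i x o c, tr[i]? = some (.alloc x o c) →
      (∀ v, (stateAt σ0 tr i).env v ≠ some c) ∧
      (∀ c' f, (stateAt σ0 tr i).heap c' f ≠ some c))
    (hUniq : ∀ (i j : ℕ) (x x' : V) (o o' : O) (c : CO),
      tr[i]? = some (Ev.alloc x o c) → tr[j]? = some (Ev.alloc x' o' c) → i = j)
    (hAllAlloc : ∀ i v c, (stateAt σ0 tr i).env v = some c →
      ∃ x'' o'', Ev.alloc x'' o'' c ∈ tr)
    (i : ℕ) (x : V) (c : CO) (x' : V) (o : O)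
    (hlen : i < tr.length)
    (hdyn : (stateAt σ0 tr (i + 1)).env x = some c)
    (halloc : Ev.alloc x' o c ∈ tr)
    (hmiss : ¬ SDerives tr x o)
    (hfirst : ∀ j ≤ i, ∀ (x1 : V) (c1 : CO) (x1' : V) (o1 : O),
      (stateAt σ0 tr j).env x1 = some c1 → Ev.alloc x1' o1 c1 ∈ tr →
      SDerives tr x1 o1) :
    ∃ m y, tr[i]? = some (Ev.call x m y c) :=
  stmt8_general σ0 hHeap tr hUniq hAllAlloc i x c x' o hlen hdyn halloc hmiss hfirst
end
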